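/- Let φ be an ML(A)-formula in negation normal form and let φ' be the ML(DD)-formula τ(φ) ∧ ¬s ∧ @_s⊤ ∧ @_{◇s}s, where s and the variables p_ψ (one for each subformula ψ of φ) are distinct fresh propositional variables not occurring in φ, and τ is defined by: τ(p) = p, τ(¬p) = ¬p, τ(ψ∨χ) = τ(ψ)∨τ(χ), τ(ψ∧χ) = τ(ψ)∧τ(χ), τ(◇ψ) = ◇τ(ψ), τ(□ψ) = □τ(ψ), τ(Eψ) = @_{p_ψ}(τ(ψ) ∧ ¬s), and τ(Aψ) = @_{(s ∨ ¬τ(ψ))}⊤. Then φ is satisfiable if and only if φ' is satisfiable. -/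

import Mathlib

/-- ML(A)-formulas in negation normal form: the basic modal language with the universal
modality `A` and its dual `E`, with negation only in front of propositional variables. -/
inductive MLA : Type
  | prop : ℕ → MLA
  | nprop : ℕ → MLA
  | and : MLA → MLA → MLA
  | or : MLA → MLA → MLA
  | dia : MLA → MLA
  | box : MLA → MLA
  | ex : MLA → MLA   -- E (somewhere)
  | all : MLA → MLA  -- A (everywhere)

/-- ML(DD)-formulas over propositional variables indexed by `α`. -/
inductive MLDD (α : Type) : Type
  | prop : α → MLDD α
  | neg : MLDD α → MLDD α
  | or : MLDD α → MLDD α → MLDD α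
  | dia : MLDD α → MLDD α
  | dd : MLDD α → MLDD α → MLDD α

/-- A Kripke model with propositional variables indexed by `α`. -/
structure Model (α : Type) where
  W : Type
  ne : Nonempty W
  R : W → W → Prop
  V : α → W → Prop

/-- Satisfaction relation for ML(DD). -/
def sat {α : Type} (M : Model α) : M.W → MLDD α → Prop
  | w, .prop p => M.V p w
  | w, .neg φ => ¬ sat M w φ
  | w, .or φ ψ => sat M w φ ∨ sat M w ψ
  | w, .dia φ => ∃ v, M.R w v ∧ sat M v φ
  | _, .dd φ ψ => ∃ v, sat M v φ ∧ sat M v ψ ∧ ∀ v', v' ≠ v → ¬ sat M v' φ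

/-- Satisfaction relation for ML(A). -/
def satA (M : Model ℕ) : M.W → MLA → Prop
  | w, .prop p => M.V p w
  | w, .nprop p => ¬ M.V p w
  | w, .and φ ψ => satA M w φ ∧ satA M w ψ
  | w, .or φ ψ => satA M w φ ∨ satA M w ψ
  | w, .dia φ => ∃ v, M.R w v ∧ satA M v φ
  | w, .box φ => ∀ v, M.R w v → satA M v φ
  | _, .ex φ => ∃ v, satA M v φ
  | _, .all φ => ∀ v, satA M v φ

/-- The type of propositional variables of the translated formulas: `.inl p` is an original
variable of φ, `.inr none` is the fresh variable `s` marking the `trash' world, and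
`.inr (some ψ)` is the fresh variable `p_ψ` for the subformula ψ. All the `.inr` variables
are fresh, i.e. distinct from each other and not occurring in φ. -/
abbrev Atom : Type := ℕ ⊕ Option MLA

/-- The fresh variable `s`. -/
def sAtom : MLDD Atom := .prop (.inr none)

/-- Conjunction, as the usual abbreviation. -/
def mand (φ ψ : MLDD Atom) : MLDD Atom := .neg (.or (.neg φ) (.neg ψ))

/-- ⊤, as a tautology. -/
def mtop : MLDD Atom := .or (.prop (.inl 0)) (.neg (.prop (.inl 0)))

/-- The translation τ from ML(A)-formulas in NNF to ML(DD)-formulas. -/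
def tr : MLA → MLDD Atom
  | .prop p => .prop (.inl p)
  | .nprop p => .neg (.prop (.inl p))
  | .and φ ψ => mand (tr φ) (tr ψ)
  | .or φ ψ => .or (tr φ) (tr ψ)
  | .dia φ => .dia (tr φ)
  | .box φ => .neg (.dia (.neg (tr φ)))
  | .ex ψ => .dd (.prop (.inr (some ψ))) (mand (tr ψ) (.neg sAtom))
  | .all ψ => .dd (.or sAtom (.neg (tr ψ))) mtop

/-- φ' = τ(φ) ∧ ¬s ∧ @_s⊤ ∧ @_{◇s}s. -/
def transl (φ : MLA) : MLDD Atom :=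
  mand (tr φ) (mand (.neg sAtom) (mand (.dd sAtom mtop) (.dd (.dia sAtom) sAtom)))


/-!
A model of φ becomes a model of φ' by adding one "trash" world, the only world where `s`
holds (reflexive and unreachable from the others, so that it is also the only world seeing an
`s`-world), and by making each `p_ψ` true at exactly one chosen witness of ψ (if ψ has one).
Then `@_{s ∨ ¬τψ}⊤` says that the trash world is the only world failing τψ or satisfying `s`,
i.e. that ψ holds at all other worlds. Conversely, in a model of φ' the conjuncts `@_s⊤` and
`@_{◇s}s` pin down a unique `s`-world `t` that no other world sees, so the worlds other than `t`
form a submodel closed under successors on which τ is sound for ML(A).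
-/

theorem sat_dd_iff_of_sat {α : Type} {M : Model α} {w t : M.W} {φ ψ : MLDD α}
    (ht : sat M t φ) :
    sat M w (.dd φ ψ) ↔ sat M t ψ ∧ ∀ v, v ≠ t → ¬ sat M v φ := by
  constructor
  · rintro ⟨u, hu, hψ, huniq⟩
    obtain rfl : u = t := by_contra fun hne => huniq t (Ne.symm hne) ht
    exact ⟨hψ, huniq⟩
  · rintro ⟨hψ, huniq⟩
    exact ⟨t, ht, hψ, huniq⟩

@[simp]
theorem sat_mand {M : Model Atom} {w : M.W} {a b : MLDD Atom} :
    sat M w (mand a b) ↔ sat M w a ∧ sat M w b := by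
  simp [mand, sat]

@[simp]
theorem sat_mtop {M : Model Atom} {w : M.W} : sat M w mtop := by
  simp only [mtop, sat]
  exact em _

section WithTrash

variable (M : Model ℕ)

noncomputable abbrev withTrash : Model Atom where
  W := Option M.W
  ne := ⟨none⟩
  R x y := match x, y with
    | some u, some v => M.R u v
    | none, none => True
    | _, _ => False
  V a x := match a, x with
    | .inl p, some v => M.V p v
    | .inr none, none => True
    | .inr (some ψ), some v => ∃ h : (∃ u, satA M u ψ), v = h.choose
    | _, _ => False

variable {M}

@[simp]
theorem withTrash_sat_sAtom {x : (withTrash M).W} : sat (withTrash M) x sAtom ↔ x = none := by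
  cases x <;> simp [sat, sAtom]

theorem withTrash_sat_tr (ψ : MLA) (v : M.W) :
    sat (withTrash M) (some v) (tr ψ) ↔ satA M v ψ := by
  induction ψ generalizing v with
  | prop p | nprop p => simp [tr, sat, satA]
  | and a b iha ihb => simp [tr, satA, iha, ihb]
  | or a b iha ihb => simp [tr, sat, satA, iha, ihb]
  | dia a iha => simp [tr, sat, satA, Option.exists, iha]
  | box a iha => simp [tr, sat, satA, Option.exists, iha]
  | ex a iha =>
    simp only [tr, satA]
    constructor
    · rintro ⟨(_ | u), hp, -⟩
      · simp [sat] at hp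
      · exact hp.1
    · intro h
      have hp : sat (withTrash M) (some h.choose) (.prop (.inr (some a))) := ⟨h, rfl⟩
      refine (sat_dd_iff_of_sat hp).2 ⟨?_, ?_⟩
      · simpa [iha, sat] using h.choose_spec
      · rintro (_ | u) hne ⟨_, rfl⟩
        exact hne rfl
  | all a iha =>
    have hs : sat (withTrash M) none (.or sAtom (.neg (tr a))) := Or.inl (by simp)
    simp [tr, satA, sat_dd_iff_of_sat hs, Option.forall, sat, iha]

theorem withTrash_sat_transl {φ : MLA} {w : M.W} (h : satA M w φ) :
    sat (withTrash M) (some w) (transl φ) := by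
  have hs : sat (withTrash M) none sAtom := by simp
  have hdia : sat (withTrash M) none (.dia sAtom) := ⟨none, trivial, hs⟩
  simp only [transl, sat_mand, withTrash_sat_tr, h, sat_dd_iff_of_sat hs,
    sat_dd_iff_of_sat hdia]
  simp [sat, Option.forall]

end WithTrash

section RemoveWorld

variable (M : Model Atom) (t : M.W)

def removeWorld (hne : Nonempty {v : M.W // v ≠ t}) : Model ℕ where
  W := {v : M.W // v ≠ t}
  ne := hne
  R u v := M.R u v
  V p v := M.V (.inl p) v

variable {M t}

theorem satA_removeWorld_of_sat_tr (hts : sat M t sAtom)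
    (hclosed : ∀ v u, v ≠ t → M.R v u → u ≠ t) (hne : Nonempty {v : M.W // v ≠ t}) (ψ : MLA)
    (v : {v : M.W // v ≠ t}) : sat M v (tr ψ) → satA (removeWorld M t hne) v ψ := by
  induction ψ generalizing v with
  | prop p | nprop p => exact id
  | and a b iha ihb =>
    rw [tr, sat_mand]
    exact fun h => ⟨iha v h.1, ihb v h.2⟩
  | or a b iha ihb => exact Or.imp (iha v) (ihb v)
  | dia a iha =>
    rintro ⟨u, hR, hu⟩
    exact ⟨⟨u, hclosed v u v.2 hR⟩, hR, iha _ hu⟩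
  | box a iha =>
    rintro h ⟨u, hu⟩ hR
    exact iha ⟨u, hu⟩ (not_not.1 fun hn => h ⟨u, hR, hn⟩)
  | ex a iha =>
    rintro ⟨u, -, hu, -⟩
    rw [sat_mand] at hu
    exact ⟨⟨u, fun e => hu.2 (e ▸ hts)⟩, iha _ hu.1⟩
  | all a iha =>
    rw [tr, sat_dd_iff_of_sat (φ := .or sAtom (.neg (tr a))) (Or.inl hts)]
    rintro ⟨-, hothers⟩ ⟨u, hu⟩
    exact iha ⟨u, hu⟩ (not_not.1 fun hn => hothers u hu (Or.inr hn))

end RemoveWorld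

theorem exists_satA_of_sat_transl {M : Model Atom} {w : M.W} {φ : MLA}
    (h : sat M w (transl φ)) : ∃ (N : Model ℕ) (v : N.W), satA N v φ := by
  simp only [transl, sat_mand] at h
  obtain ⟨hτ, hws, ⟨t, hts, -, hs_unique⟩, ⟨u, -, hus, hdia_unique⟩⟩ := h
  obtain rfl : t = u := by_contra fun hne => hs_unique u (Ne.symm hne) hus
  have hwt : w ≠ t := fun e => hws (e ▸ hts)
  have hclosed : ∀ v u, v ≠ t → M.R v u → u ≠ t := fun v u hv hR e =>
    hdia_unique v hv ⟨u, hR, e ▸ hts⟩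
  exact ⟨removeWorld M t ⟨⟨w, hwt⟩⟩, ⟨w, hwt⟩,
    satA_removeWorld_of_sat_tr hts hclosed _ φ ⟨w, hwt⟩ hτ⟩

/-- φ is satisfiable iff φ' = τ(φ) ∧ ¬s ∧ @_s⊤ ∧ @_{◇s}s is satisfiable. -/
theorem mla_satisfiable_iff_transl_satisfiable (φ : MLA) :
    (∃ (M : Model ℕ) (w : M.W), satA M w φ) ↔
    (∃ (M : Model Atom) (w : M.W), sat M w (transl φ)) :=
  ⟨fun ⟨M, w, h⟩ => ⟨withTrash M, some w, withTrash_sat_transl h⟩,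
    fun ⟨_, _, h⟩ => exists_satA_of_sat_transl h⟩
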